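/- Let X be a Hilbert space and let φ : X → ℝ ∪ {+∞} be a proper, prox-bounded, lower semicontinuous function, and let x̄ ∈ dom φ and σ > 0. Assume that there exists λ₀ > 0 such that P_λφ(x̄) ≠ ∅ for all λ ∈ (0, λ₀), and that there exists λ̄ > 0 such that for every λ ∈ (0, λ̄) the point x̄ is a strong local minimizer of the Moreau envelope e_λφ with modulus σ/(1 + σλ). Then x̄ is a strong local minimizer of φ with modulus σ. -/

import Mathlib

/-!
Take `λ` small and `w ∈ P_λφ(x̄)`. Moving from `x̄` a fraction `t` of the way towards `w` gives
`e_λφ(x̄ + t(w − x̄)) ≤ φ(w) + (1 − t)²‖w − x̄‖²/(2λ) < e_λφ(x̄)` unless `w = x̄`; since `x̄`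
locally minimizes `e_λφ`, we get `w = x̄` and hence `e_λφ(x̄) = φ(x̄)`. Then for `z` near `x̄` the
stretched point `y = x̄ + (1 + σλ)(z − x̄)` gives
`φ(x̄) + σ(1 + σλ)/2 ‖z − x̄‖² ≤ e_λφ(y) ≤ φ(z) + ‖z − y‖²/(2λ) = φ(z) + σ²λ/2 ‖z − x̄‖²`,
which is the growth `φ(z) ≥ φ(x̄) + σ/2 ‖z − x̄‖²`.
-/

open Filter Topology

variable {X : Type*}

/-- Moreau envelope `e_λφ(x) = inf_w { φ(w) + (1/(2λ))‖w − x‖² }`, valued in `EReal`. -/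
noncomputable def moreauEnv [NormedAddCommGroup X] (lam : ℝ) (φ : X → EReal) (x : X) : EReal :=
  ⨅ w : X, φ w + (((1 / (2 * lam)) * ‖w - x‖ ^ 2 : ℝ) : EReal)

/-- Proximal mapping `P_λφ(x) = argmin_w { φ(w) + (1/(2λ))‖w − x‖² }`. -/
def proxSet [NormedAddCommGroup X] (lam : ℝ) (φ : X → EReal) (x : X) : Set X :=
  {w : X | ∀ v : X,
    φ w + (((1 / (2 * lam)) * ‖w - x‖ ^ 2 : ℝ) : EReal)
      ≤ φ v + (((1 / (2 * lam)) * ‖v - x‖ ^ 2 : ℝ) : EReal)}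

/-- A function `X → ℝ ∪ {+∞}` modeled as `X → EReal`: proper means not identically `+∞`
and never `−∞`. -/
def IsProper [NormedAddCommGroup X] (φ : X → EReal) : Prop :=
  (∃ x : X, φ x ≠ ⊤) ∧ ∀ x : X, φ x ≠ ⊥

/-- Prox-boundedness: `φ(y) ≥ α‖y − x̄‖² + β` for some `α, β ∈ ℝ`, `x̄ ∈ X`. -/
def ProxBounded [NormedAddCommGroup X] (φ : X → EReal) : Prop :=
  ∃ (a b : ℝ) (x0 : X), ∀ y : X, ((a * ‖y - x0‖ ^ 2 + b : ℝ) : EReal) ≤ φ y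

/-- Weak convergence of a sequence: `⟨f, u k⟩ → ⟨f, x⟩` for every continuous linear functional. -/
def WeakConv [NormedAddCommGroup X] [NormedSpace ℝ X] (u : ℕ → X) (x : X) : Prop :=
  ∀ f : X →L[ℝ] ℝ, Tendsto (fun k => f (u k)) atTop (𝓝 (f x))

/-- Weak sequential lower semicontinuity. -/
def WeakSeqLSC [NormedAddCommGroup X] [NormedSpace ℝ X] (φ : X → EReal) : Prop :=
  ∀ (x : X) (u : ℕ → X), WeakConv u x → φ x ≤ liminf (fun k => φ (u k)) atTop

/-- Sequential form of reflexivity: every bounded sequence has a weakly convergent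
subsequence. -/
def SeqReflexive (X : Type*) [NormedAddCommGroup X] [NormedSpace ℝ X] : Prop :=
  ∀ u : ℕ → X, (∃ C : ℝ, ∀ k, ‖u k‖ ≤ C) →
    ∃ (s : ℕ → ℕ) (z : X), StrictMono s ∧ WeakConv (u ∘ s) z

/-- Local minimizer. -/
def LocalMin [NormedAddCommGroup X] (g : X → EReal) (x0 : X) : Prop :=
  ∃ ε > (0 : ℝ), ∀ x : X, ‖x - x0‖ < ε → g x0 ≤ g x

/-- Strong local minimizer with modulus `σ`. -/
def StrongLocalMin [NormedAddCommGroup X] (g : X → EReal) (x0 : X) (σ : ℝ) : Prop :=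
  ∃ ε > (0 : ℝ), ∀ x : X, ‖x - x0‖ < ε →
    g x0 + (((σ / 2) * ‖x - x0‖ ^ 2 : ℝ) : EReal) ≤ g x

/-- The zero functional `0 ∈ X*` is a proximal subgradient of `φ` at `x0`. -/
def ZeroProxSubgradient [NormedAddCommGroup X] [NormedSpace ℝ X] (φ : X → EReal) (x0 : X) :
    Prop :=
  ∃ r > (0 : ℝ), ∃ ε > (0 : ℝ), ∀ x : X, ‖x - x0‖ < ε →
    φ x0 + ((((0 : X →L[ℝ] ℝ) (x - x0)) - (r / 2) * ‖x - x0‖ ^ 2 : ℝ) : EReal) ≤ φ x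

section MoreauEnvelope

variable [NormedAddCommGroup X] {lam : ℝ} {φ : X → EReal} {x w : X}

theorem moreauEnv_le (lam : ℝ) (φ : X → EReal) (x w : X) :
    moreauEnv lam φ x ≤ φ w + (((1 / (2 * lam)) * ‖w - x‖ ^ 2 : ℝ) : EReal) :=
  iInf_le (fun v => φ v + (((1 / (2 * lam)) * ‖v - x‖ ^ 2 : ℝ) : EReal)) w

theorem moreauEnv_eq_of_mem_proxSet (hw : w ∈ proxSet lam φ x) :
    moreauEnv lam φ x = φ w + (((1 / (2 * lam)) * ‖w - x‖ ^ 2 : ℝ) : EReal) :=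
  le_antisymm (moreauEnv_le lam φ x w) (le_iInf hw)

theorem add_le_of_mem_proxSet (hw : w ∈ proxSet lam φ x) :
    φ w + (((1 / (2 * lam)) * ‖w - x‖ ^ 2 : ℝ) : EReal) ≤ φ x := by
  simpa using hw x

theorem ne_top_of_mem_proxSet (hw : w ∈ proxSet lam φ x) (hx : φ x ≠ ⊤) : φ w ≠ ⊤ := by
  rintro hwtop
  have := add_le_of_mem_proxSet hw
  rw [hwtop, EReal.top_add_coe, top_le_iff] at this
  exact hx this

theorem moreauEnv_eq_self_of_mem_proxSet_self (hx : x ∈ proxSet lam φ x) :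
    moreauEnv lam φ x = φ x := by
  simpa using moreauEnv_eq_of_mem_proxSet hx

theorem StrongLocalMin.localMin {g : X → EReal} {σ : ℝ} (h : StrongLocalMin g x σ)
    (hσ : 0 ≤ σ) : LocalMin g x := by
  obtain ⟨ε, hε, hg⟩ := h
  exact ⟨ε, hε, fun y hy => le_trans (le_add_of_nonneg_right (EReal.coe_nonneg.2 (by positivity)))
    (hg y hy)⟩

variable [NormedSpace ℝ X]

theorem moreauEnv_lt_of_mem_proxSet (hlam : 0 < lam) (hw : w ∈ proxSet lam φ x) {s : ℝ}
    (hs : φ w = s) (hwx : w ≠ x) {t : ℝ} (ht₀ : 0 < t) (ht₁ : t ≤ 1) :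
    moreauEnv lam φ (x + t • (w - x)) < moreauEnv lam φ x := by
  have hd : 0 < ‖w - x‖ := norm_pos_iff.2 (sub_ne_zero.2 hwx)
  have hdist : ‖w - (x + t • (w - x))‖ = (1 - t) * ‖w - x‖ := by
    rw [show w - (x + t • (w - x)) = (1 - t) • (w - x) by module, norm_smul,
      Real.norm_of_nonneg (by linarith)]
  calc moreauEnv lam φ (x + t • (w - x))
      ≤ φ w + (((1 / (2 * lam)) * ((1 - t) * ‖w - x‖) ^ 2 : ℝ) : EReal) :=
        hdist ▸ moreauEnv_le lam φ _ w
    _ < φ w + (((1 / (2 * lam)) * ‖w - x‖ ^ 2 : ℝ) : EReal) := by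
        rw [hs]
        refine EReal.add_lt_add_left_coe (EReal.coe_lt_coe_iff.2 ?_) s
        have : ((1 - t) * ‖w - x‖) ^ 2 < ‖w - x‖ ^ 2 := by
          rw [mul_pow]
          exact mul_lt_of_lt_one_left (by positivity) (by nlinarith)
        gcongr
    _ = moreauEnv lam φ x := (moreauEnv_eq_of_mem_proxSet hw).symm

theorem eq_of_mem_proxSet_of_localMin (hlam : 0 < lam) (hw : w ∈ proxSet lam φ x)
    (hx : φ x ≠ ⊤) (hw_bot : φ w ≠ ⊥) (hmin : LocalMin (moreauEnv lam φ) x) : w = x := by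
  by_contra hwx
  obtain ⟨ε, hε, hle⟩ := hmin
  lift φ w to ℝ using ⟨ne_top_of_mem_proxSet hw hx, hw_bot⟩ with s hs
  have hd : 0 < ‖w - x‖ := norm_pos_iff.2 (sub_ne_zero.2 hwx)
  set t := min 1 (ε / (2 * ‖w - x‖))
  have ht₀ : 0 < t := by positivity
  have hclose : ‖x + t • (w - x) - x‖ < ε := by
    rw [add_sub_cancel_left, norm_smul, Real.norm_of_nonneg ht₀.le]
    calc t * ‖w - x‖ ≤ ε / (2 * ‖w - x‖) * ‖w - x‖ := by gcongr; exact min_le_right _ _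
      _ < ε := by field_simp; linarith
  exact (hle _ hclose).not_gt
    (moreauEnv_lt_of_mem_proxSet hlam hw hs.symm hwx ht₀ (min_le_left _ _))

theorem StrongLocalMin.of_moreauEnv {σ : ℝ} (hlam : 0 < lam) (hσ : 0 ≤ σ)
    (hx : moreauEnv lam φ x = φ x)
    (hmin : StrongLocalMin (moreauEnv lam φ) x (σ / (1 + σ * lam))) :
    StrongLocalMin φ x σ := by
  obtain ⟨ε, hε, hle⟩ := hmin
  have hk : 0 < 1 + σ * lam := by positivity
  refine ⟨ε / (1 + σ * lam), by positivity, fun z hz => ?_⟩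
  set y := x + (1 + σ * lam) • (z - x)
  have hyx : ‖y - x‖ = (1 + σ * lam) * ‖z - x‖ := by
    rw [add_sub_cancel_left, norm_smul, Real.norm_of_nonneg hk.le]
  have hzy : ‖z - y‖ = σ * lam * ‖z - x‖ := by
    rw [show z - y = (-(σ * lam)) • (z - x) by module, norm_smul, norm_neg,
      Real.norm_of_nonneg (by positivity)]
  have hy : ‖y - x‖ < ε := by
    rw [hyx]; exact (lt_div_iff₀' hk).1 hz
  have hgap : σ / (1 + σ * lam) / 2 * ‖y - x‖ ^ 2
      = σ / 2 * ‖z - x‖ ^ 2 + 1 / (2 * lam) * ‖z - y‖ ^ 2 := by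
    rw [hyx, hzy]; field_simp
  rw [← (EReal.addLECancellable_coe (1 / (2 * lam) * ‖z - y‖ ^ 2)).add_le_add_iff_right]
  calc φ x + ((σ / 2 * ‖z - x‖ ^ 2 : ℝ) : EReal) + ((1 / (2 * lam) * ‖z - y‖ ^ 2 : ℝ) : EReal)
      = moreauEnv lam φ x + ((σ / (1 + σ * lam) / 2 * ‖y - x‖ ^ 2 : ℝ) : EReal) := by
        rw [hx, hgap, EReal.coe_add, add_assoc]
    _ ≤ moreauEnv lam φ y := hle y hy
    _ ≤ φ z + ((1 / (2 * lam) * ‖z - y‖ ^ 2 : ℝ) : EReal) := moreauEnv_le lam φ y z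

end MoreauEnvelope

theorem statement16_general [NormedAddCommGroup X] [InnerProductSpace ℝ X]
    (φ : X → EReal) (hproper : IsProper φ)
    (xb : X) (hdom : φ xb ≠ ⊤) (σ : ℝ) (hσ : 0 < σ)
    (hne : ∃ lam0 > (0 : ℝ), ∀ lam : ℝ, 0 < lam → lam < lam0 → (proxSet lam φ xb).Nonempty)
    (hmin : ∃ lamb > (0 : ℝ), ∀ lam : ℝ, 0 < lam → lam < lamb →
      StrongLocalMin (moreauEnv lam φ) xb (σ / (1 + σ * lam))) :
    StrongLocalMin φ xb σ := by
  obtain ⟨lam0, hlam0, hne⟩ := hne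
  obtain ⟨lamb, hlamb, hmin⟩ := hmin
  obtain ⟨lam, hlam, hlt0, hltb⟩ : ∃ lam : ℝ, 0 < lam ∧ lam < lam0 ∧ lam < lamb :=
    ⟨min lam0 lamb / 2, by positivity, by linarith [min_le_left lam0 lamb],
      by linarith [min_le_right lam0 lamb]⟩
  obtain ⟨w, hw⟩ := hne lam hlam hlt0
  have hsmin := hmin lam hlam hltb
  have hwx : w = xb := eq_of_mem_proxSet_of_localMin hlam hw hdom (hproper.2 w)
    (hsmin.localMin (by positivity))
  subst hwx
  exact hsmin.of_moreauEnv hlam hσ.le (moreauEnv_eq_self_of_mem_proxSet_self hw)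

/-- if `P_λφ(x̄) ≠ ∅` for all small `λ > 0` and `x̄` is a strong local
minimizer of `e_λφ` with modulus `σ/(1 + σλ)` for all small `λ > 0`, then `x̄` is a
strong local minimizer of `φ` with modulus `σ`. -/
theorem statement16 [NormedAddCommGroup X] [InnerProductSpace ℝ X] [CompleteSpace X]
    (φ : X → EReal) (hproper : IsProper φ) (hpb : ProxBounded φ)
    (hlsc : LowerSemicontinuous φ)
    (xb : X) (hdom : φ xb ≠ ⊤) (σ : ℝ) (hσ : 0 < σ)
    (hne : ∃ lam0 > (0 : ℝ), ∀ lam : ℝ, 0 < lam → lam < lam0 → (proxSet lam φ xb).Nonempty)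
    (hmin : ∃ lamb > (0 : ℝ), ∀ lam : ℝ, 0 < lam → lam < lamb →
      StrongLocalMin (moreauEnv lam φ) xb (σ / (1 + σ * lam))) :
    StrongLocalMin φ xb σ :=
  statement16_general φ hproper xb hdom σ hσ hne hmin
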